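/- arXiv:2510.27043 — 4 statements merged into one kernel-verified Lean document; each statement's English description precedes it below -/
import Mathlib

section
/- Let H, X, D, Y be finite sets and let p be a probability mass function on H × X × D × Y. For each y ∈ Y let q₁(·,·|y) be a probability mass function on H × X that is strictly positive at every (h,x) with p-marginal probability p_{H,X,Y}(h,x,y) > 0, and for each x ∈ X let q₂(·|x) be a probability mass function on D that is strictly positive at every d with p_{D,X}(d,x) > 0. Then H(H, D | Y) ≤ −Σ_{h,x,y} p_{H,X,Y}(h,x,y) ln q₁(h,x|y) − Σ_{d,x} p_{D,X}(d,x) ln q₂(d|x); that is, the conditional entropy of the channel and the source given the received signal is upper-bounded by the sum of the cross-entropy loss of a blind detector and the cross-entropy loss of a JSCC decoder. -/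
/-- Pointwise Gibbs-type bound: `p * log (q₁ q₂ B / A) ≤ q₁ q₂ B - p`. -/
lemma gibbs_pointwise (pv A B q1 q2 : ℝ)
    (hp : 0 ≤ pv) (hpA : pv ≤ A) (hAB : A ≤ B)
    (hq1 : 0 ≤ q1) (hq2 : 0 ≤ q2)
    (hq1p : 0 < pv → 0 < q1) (hq2p : 0 < pv → 0 < q2) :
    pv * Real.log q1 + pv * Real.log q2 + (pv * Real.log B - pv * Real.log A)
      ≤ q1 * q2 * B - pv := by
  rcases eq_or_lt_of_le hp with h0 | hppos
  · have hB : 0 ≤ B := le_trans (h0 ▸ hpA) hAB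
    rw [← h0]
    simp
    positivity
  · have hA : 0 < A := lt_of_lt_of_le hppos hpA
    have hB : 0 < B := lt_of_lt_of_le hA hAB
    have hq1' := hq1p hppos
    have hq2' := hq2p hppos
    have hT : 0 < q1 * q2 * B / A := by positivity
    have hlog : Real.log (q1 * q2 * B / A) ≤ q1 * q2 * B / A - 1 :=
      Real.log_le_sub_one_of_pos hT
    have hsplit : Real.log (q1 * q2 * B / A)
        = Real.log q1 + Real.log q2 + (Real.log B - Real.log A) := by
      rw [Real.log_div (by positivity) (ne_of_gt hA),
        Real.log_mul (by positivity) (ne_of_gt hB),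
        Real.log_mul (ne_of_gt hq1') (ne_of_gt hq2')]
      ring
    have h1 : pv * Real.log (q1 * q2 * B / A) ≤ pv * (q1 * q2 * B / A - 1) :=
      mul_le_mul_of_nonneg_left hlog hp
    have h2 : pv * (q1 * q2 * B / A) ≤ q1 * q2 * B := by
      rw [mul_div_assoc', div_le_iff₀ hA]
      nlinarith [mul_le_mul_of_nonneg_left hpA (show (0:ℝ) ≤ q1 * q2 * B by positivity)]
    calc pv * Real.log q1 + pv * Real.log q2 + (pv * Real.log B - pv * Real.log A)
        = pv * Real.log (q1 * q2 * B / A) := by rw [hsplit]; ring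
      _ ≤ pv * (q1 * q2 * B / A - 1) := h1
      _ = pv * (q1 * q2 * B / A) - pv := by ring
      _ ≤ q1 * q2 * B - pv := by linarith

/-- For a pmf `p` on `H × X × D × Y`, a family of pmfs `q₁(·,·|y)` on
`H × X` strictly positive wherever the marginal `p_{H,X,Y}` is, and a family of pmfs
`q₂(·|x)` on `D` strictly positive wherever the marginal `p_{D,X}` is, the conditional
entropy of the channel and the source given the received signal is upper-bounded by
the sum of the cross-entropy loss of a blind detector and that of a JSCC decoder:
`H(H, D | Y) ≤ −Σ p_{H,X,Y}(h,x,y) ln q₁(h,x|y) − Σ p_{D,X}(d,x) ln q₂(d|x)`.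
(Relaxation chain (8) of the paper.) -/
theorem cond_entropy_le_blind_detector_loss_add_jscc_loss
    {H X D Y : Type*} [Fintype H] [Fintype X] [Fintype D] [Fintype Y]
    (p : H → X → D → Y → ℝ)
    (hp_nonneg : ∀ h x d y, 0 ≤ p h x d y)
    (hp_sum : ∑ h, ∑ x, ∑ d, ∑ y, p h x d y = 1)
    (q₁ : Y → H → X → ℝ)
    (hq₁_nonneg : ∀ y h x, 0 ≤ q₁ y h x)
    (hq₁_sum : ∀ y, ∑ h, ∑ x, q₁ y h x = 1)
    (hq₁_pos : ∀ y h x, 0 < (∑ d, p h x d y) → 0 < q₁ y h x)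
    (q₂ : X → D → ℝ)
    (hq₂_nonneg : ∀ x d, 0 ≤ q₂ x d)
    (hq₂_sum : ∀ x, ∑ d, q₂ x d = 1)
    (hq₂_pos : ∀ x d, 0 < (∑ h, ∑ y, p h x d y) → 0 < q₂ x d) :
    -(∑ h, ∑ d, ∑ y, (∑ x, p h x d y) *
        Real.log ((∑ x, p h x d y) / (∑ h', ∑ x', ∑ d', p h' x' d' y))) ≤
      -(∑ h, ∑ x, ∑ y, (∑ d, p h x d y) * Real.log (q₁ y h x)) +
      -(∑ d, ∑ x, (∑ h, ∑ y, p h x d y) * Real.log (q₂ x d)) := by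
  classical
  set A : H → D → Y → ℝ := fun h d y => ∑ x, p h x d y with hAdef
  set B : Y → ℝ := fun y => ∑ h', ∑ x', ∑ d', p h' x' d' y with hBdef
  have hpA : ∀ h x d y, p h x d y ≤ A h d y := by
    intro h x d y
    exact Finset.single_le_sum (fun i _ => hp_nonneg h i d y) (Finset.mem_univ x)
  have hAB : ∀ h d y, A h d y ≤ B y := by
    intro h d y
    have h1 : A h d y ≤ ∑ x', ∑ d', p h x' d' y := by
      apply Finset.sum_le_sum
      intro x _
      exact Finset.single_le_sum (fun i _ => hp_nonneg h x i y) (Finset.mem_univ d)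
    refine le_trans h1 ?_
    exact Finset.single_le_sum
      (fun i _ => Finset.sum_nonneg fun x _ => Finset.sum_nonneg fun d' _ => hp_nonneg i x d' y)
      (Finset.mem_univ h)
  have hq₁p : ∀ h x d y, 0 < p h x d y → 0 < q₁ y h x := by
    intro h x d y hp'
    exact hq₁_pos y h x (lt_of_lt_of_le hp'
      (Finset.single_le_sum (fun i _ => hp_nonneg h x i y) (Finset.mem_univ d)))
  have hq₂p : ∀ h x d y, 0 < p h x d y → 0 < q₂ x d := by
    intro h x d y hp'
    apply hq₂_pos x d
    have h1 : p h x d y ≤ ∑ y', p h x d y' :=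
      Finset.single_le_sum (fun i _ => hp_nonneg h x d i) (Finset.mem_univ y)
    have h2 : (∑ y', p h x d y') ≤ ∑ h', ∑ y', p h' x d y' :=
      Finset.single_le_sum
        (fun i _ => Finset.sum_nonneg fun y' _ => hp_nonneg i x d y') (Finset.mem_univ h)
    linarith
  -- main summed inequality
  have main : (∑ h, ∑ x, ∑ d, ∑ y,
      (p h x d y * Real.log (q₁ y h x) + p h x d y * Real.log (q₂ x d)
        + (p h x d y * Real.log (B y) - p h x d y * Real.log (A h d y))))
      ≤ ∑ h, ∑ x, ∑ d, ∑ y, (q₁ y h x * q₂ x d * B y - p h x d y) := by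
    refine Finset.sum_le_sum fun h _ => Finset.sum_le_sum fun x _ =>
      Finset.sum_le_sum fun d _ => Finset.sum_le_sum fun y _ => ?_
    exact gibbs_pointwise (p h x d y) (A h d y) (B y) (q₁ y h x) (q₂ x d)
      (hp_nonneg h x d y) (hpA h x d y) (hAB h d y)
      (hq₁_nonneg y h x) (hq₂_nonneg x d) (hq₁p h x d y) (hq₂p h x d y)
  -- RHS of main equals 0
  have hByall : (∑ y, B y) = 1 := by
    rw [hBdef]
    rw [← hp_sum]
    rw [Finset.sum_comm]
    refine Finset.sum_congr rfl fun h _ => ?_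
    rw [Finset.sum_comm]
    refine Finset.sum_congr rfl fun x _ => ?_
    exact Finset.sum_comm
  have hT : (∑ h, ∑ x, ∑ d, ∑ y, q₁ y h x * q₂ x d * B y) = 1 := by
    have step1 : ∀ h x, (∑ d, ∑ y, q₁ y h x * q₂ x d * B y)
        = ∑ y, q₁ y h x * B y := by
      intro h x
      rw [Finset.sum_comm]
      refine Finset.sum_congr rfl fun y _ => ?_
      have : (∑ d, q₁ y h x * q₂ x d) = q₁ y h x := by
        rw [← Finset.mul_sum, hq₂_sum x, mul_one]
      calc (∑ d, q₁ y h x * q₂ x d * B y) = (∑ d, q₁ y h x * q₂ x d) * B y := by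
            rw [Finset.sum_mul]
        _ = q₁ y h x * B y := by rw [this]
    calc (∑ h, ∑ x, ∑ d, ∑ y, q₁ y h x * q₂ x d * B y)
        = ∑ h, ∑ x, ∑ y, q₁ y h x * B y := by
          refine Finset.sum_congr rfl fun h _ => Finset.sum_congr rfl fun x _ => step1 h x
      _ = ∑ h, ∑ y, ∑ x, q₁ y h x * B y :=
          Finset.sum_congr rfl fun h _ => Finset.sum_comm
      _ = ∑ y, ∑ h, ∑ x, q₁ y h x * B y := Finset.sum_comm
      _ = ∑ y, B y := by
          refine Finset.sum_congr rfl fun y _ => ?_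
          have : (∑ h, ∑ x, q₁ y h x * B y) = (∑ h, ∑ x, q₁ y h x) * B y := by
            rw [Finset.sum_mul]
            exact Finset.sum_congr rfl fun h _ => by rw [Finset.sum_mul]
          rw [this, hq₁_sum y, one_mul]
      _ = 1 := hByall
  have hPsum : (∑ h, ∑ x, ∑ d, ∑ y, p h x d y) = 1 := hp_sum
  have hRHS0 : (∑ h, ∑ x, ∑ d, ∑ y, (q₁ y h x * q₂ x d * B y - p h x d y)) = 0 := by
    simp only [Finset.sum_sub_distrib]
    rw [hT, hPsum]
    ring
  -- split the LHS of main into three sums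
  have hsplitL : (∑ h, ∑ x, ∑ d, ∑ y,
      (p h x d y * Real.log (q₁ y h x) + p h x d y * Real.log (q₂ x d)
        + (p h x d y * Real.log (B y) - p h x d y * Real.log (A h d y))))
      = (∑ h, ∑ x, ∑ d, ∑ y, p h x d y * Real.log (q₁ y h x))
        + (∑ h, ∑ x, ∑ d, ∑ y, p h x d y * Real.log (q₂ x d))
        + (∑ h, ∑ x, ∑ d, ∑ y,
            (p h x d y * Real.log (B y) - p h x d y * Real.log (A h d y))) := by
    simp only [Finset.sum_add_distrib]
  -- identify the three goal sums
  have E1 : (∑ h, ∑ x, ∑ y, (∑ d, p h x d y) * Real.log (q₁ y h x))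
      = ∑ h, ∑ x, ∑ d, ∑ y, p h x d y * Real.log (q₁ y h x) := by
    refine Finset.sum_congr rfl fun h _ => Finset.sum_congr rfl fun x _ => ?_
    rw [Finset.sum_comm]
    refine Finset.sum_congr rfl fun y _ => ?_
    rw [Finset.sum_mul]
  have E2 : (∑ d, ∑ x, (∑ h, ∑ y, p h x d y) * Real.log (q₂ x d))
      = ∑ h, ∑ x, ∑ d, ∑ y, p h x d y * Real.log (q₂ x d) := by
    calc (∑ d, ∑ x, (∑ h, ∑ y, p h x d y) * Real.log (q₂ x d))
        = ∑ d, ∑ x, ∑ h, ∑ y, p h x d y * Real.log (q₂ x d) := by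
          refine Finset.sum_congr rfl fun d _ => Finset.sum_congr rfl fun x _ => ?_
          rw [Finset.sum_mul]
          exact Finset.sum_congr rfl fun h _ => by rw [Finset.sum_mul]
      _ = ∑ x, ∑ d, ∑ h, ∑ y, p h x d y * Real.log (q₂ x d) := Finset.sum_comm
      _ = ∑ x, ∑ h, ∑ d, ∑ y, p h x d y * Real.log (q₂ x d) :=
          Finset.sum_congr rfl fun x _ => Finset.sum_comm
      _ = ∑ h, ∑ x, ∑ d, ∑ y, p h x d y * Real.log (q₂ x d) := Finset.sum_comm
  have E3 : (∑ h, ∑ d, ∑ y, A h d y * Real.log (A h d y / B y))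
      = -∑ h, ∑ x, ∑ d, ∑ y,
          (p h x d y * Real.log (B y) - p h x d y * Real.log (A h d y)) := by
    have step : ∀ h d y, A h d y * Real.log (A h d y / B y)
        = ∑ x, (p h x d y * Real.log (A h d y) - p h x d y * Real.log (B y)) := by
      intro h d y
      have hA0 : 0 ≤ A h d y := Finset.sum_nonneg fun x _ => hp_nonneg h x d y
      rcases eq_or_lt_of_le hA0 with h0 | hpos
      · have hz : ∀ x, p h x d y = 0 := by
          intro x
          have := (Finset.sum_eq_zero_iff_of_nonneg
            (fun i _ => hp_nonneg h i d y)).mp h0.symm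
          exact this x (Finset.mem_univ x)
        rw [← h0]
        simp [hz]
      · have hB : 0 < B y := lt_of_lt_of_le hpos (hAB h d y)
        rw [Real.log_div (ne_of_gt hpos) (ne_of_gt hB)]
        have : (∑ x, (p h x d y * Real.log (A h d y) - p h x d y * Real.log (B y)))
            = (∑ x, p h x d y) * (Real.log (A h d y) - Real.log (B y)) := by
          rw [Finset.sum_mul]
          exact Finset.sum_congr rfl fun x _ => by ring
        rw [this]
    calc (∑ h, ∑ d, ∑ y, A h d y * Real.log (A h d y / B y))
        = ∑ h, ∑ d, ∑ y, ∑ x,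
            (p h x d y * Real.log (A h d y) - p h x d y * Real.log (B y)) := by
          refine Finset.sum_congr rfl fun h _ => Finset.sum_congr rfl fun d _ =>
            Finset.sum_congr rfl fun y _ => step h d y
      _ = ∑ h, ∑ x, ∑ d, ∑ y,
            (p h x d y * Real.log (A h d y) - p h x d y * Real.log (B y)) := by
          refine Finset.sum_congr rfl fun h _ => ?_
          calc (∑ d, ∑ y, ∑ x,
                (p h x d y * Real.log (A h d y) - p h x d y * Real.log (B y)))
              = ∑ d, ∑ x, ∑ y,
                (p h x d y * Real.log (A h d y) - p h x d y * Real.log (B y)) :=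
                Finset.sum_congr rfl fun d _ => Finset.sum_comm
            _ = ∑ x, ∑ d, ∑ y,
                (p h x d y * Real.log (A h d y) - p h x d y * Real.log (B y)) :=
                Finset.sum_comm
      _ = -∑ h, ∑ x, ∑ d, ∑ y,
            (p h x d y * Real.log (B y) - p h x d y * Real.log (A h d y)) := by
          simp only [← Finset.sum_neg_distrib, neg_sub]
  have hgoalL : (∑ h, ∑ d, ∑ y, (∑ x, p h x d y) *
      Real.log ((∑ x, p h x d y) / (∑ h', ∑ x', ∑ d', p h' x' d' y)))
      = ∑ h, ∑ d, ∑ y, A h d y * Real.log (A h d y / B y) := rfl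
  rw [hgoalL, E3]
  rw [show -(∑ h, ∑ x, ∑ y, (∑ d, p h x d y) * Real.log (q₁ y h x))
      = -(∑ h, ∑ x, ∑ d, ∑ y, p h x d y * Real.log (q₁ y h x)) by rw [E1]]
  rw [show -(∑ d, ∑ x, (∑ h, ∑ y, p h x d y) * Real.log (q₂ x d))
      = -(∑ h, ∑ x, ∑ d, ∑ y, p h x d y * Real.log (q₂ x d)) by rw [E2]]
  rw [hsplitL, hRHS0] at main
  linarith
end

section
/- Let H, D, X_d, Y_p, Y_d be finite sets and let p be a probability mass function on H × D × X_d × Y_p × Y_d. Then the conditional entropies computed from p satisfy H(H, D | (Y_p, Y_d)) ≤ H(H | Y_p) + H((D, X_d) | (Y_d, H)). -/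
/-!
In entropy notation the chain reads
`H(H,D | Yp,Yd) ≤ H(H,D,Xd | Yp,Yd) = H(H | Yp,Yd) + H(D,Xd | H,Yp,Yd)`
`               ≤ H(H | Yp) + H(D,Xd | Yd,H)`:
enlarging the outcome cannot decrease conditional entropy, then the chain rule, then dropping
part of the condition cannot decrease it either. The last step is the log-sum inequality, itself
Jensen's inequality for the convex function `t ↦ t log t`.
-/

open Real Finset

lemma mul_log_sum_div_sum_le {ι : Type*} (s : Finset ι) {x y : ι → ℝ}
    (hx : ∀ i ∈ s, 0 ≤ x i) (hy : ∀ i ∈ s, 0 ≤ y i) (hxy : ∀ i ∈ s, y i = 0 → x i = 0) :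
    (∑ i ∈ s, x i) * log ((∑ i ∈ s, x i) / ∑ i ∈ s, y i) ≤ ∑ i ∈ s, x i * log (x i / y i) := by
  rcases (sum_nonneg hy).eq_or_lt with hY | hY
  · have hx0 : ∀ i ∈ s, x i = 0 := fun i hi =>
      hxy i hi ((sum_eq_zero_iff_of_nonneg hy).1 hY.symm i hi)
    have hterm0 : ∀ i ∈ s, x i * log (x i / y i) = 0 := fun i hi => by rw [hx0 i hi, zero_mul]
    simp [sum_eq_zero hx0, sum_eq_zero hterm0]
  · set Y := ∑ i ∈ s, y i
    have hweight : ∀ i ∈ s, y i / Y * (x i / y i) = x i / Y := fun i hi => by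
      rcases (hy i hi).eq_or_lt with h | h
      · simp [← h, hxy i hi h.symm]
      · field_simp
    have jensen := convexOn_mul_log.map_sum_le (t := s) (w := fun i => y i / Y)
      (p := fun i => x i / y i) (fun i hi => div_nonneg (hy i hi) hY.le)
      (by rw [← sum_div, div_self hY.ne'])
      (fun i hi => Set.mem_Ici.2 (div_nonneg (hx i hi) (hy i hi)))
    simp only [smul_eq_mul, ← mul_assoc, sum_congr rfl hweight, ← sum_div] at jensen
    have hrhs : ∑ i ∈ s, y i / Y * (x i / y i) * log (x i / y i)
        = (∑ i ∈ s, x i * log (x i / y i)) / Y := by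
      rw [sum_div]
      exact sum_congr rfl fun i hi => by rw [hweight i hi]; ring
    rwa [hrhs, div_mul_eq_mul_div, div_le_div_iff_of_pos_right hY] at jensen

section CondEntropy

variable {α β γ : Type*} [Fintype α] [Fintype β] [Fintype γ]

/-- `q a b` is the joint mass of `(A, B) = (a, b)` and `condEntropy q` is `H(A | B)`. Terms with
`q a b = 0`, among them all those with vanishing marginal `∑ a', q a' b`, drop out, so the junk
values of `/` and `log` at `0` never enter. -/
noncomputable def condEntropy (q : α → β → ℝ) : ℝ :=
  -∑ a, ∑ b, q a b * log (q a b / ∑ a', q a' b)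

lemma condEntropy_comp_equiv_left {α' : Type*} [Fintype α'] (e : α' ≃ α) (q : α → β → ℝ) :
    condEntropy (fun a b => q (e a) b) = condEntropy q := by
  have hmarg : ∀ b, ∑ a', q (e a') b = ∑ a', q a' b := fun b => e.sum_comp (q · b)
  simp only [condEntropy, hmarg]
  exact congrArg Neg.neg (e.sum_comp fun a => ∑ b, q a b * log (q a b / ∑ a', q a' b))

lemma condEntropy_comp_equiv_right {β' : Type*} [Fintype β'] (e : β' ≃ β) (q : α → β → ℝ) :
    condEntropy (fun a b => q a (e b)) = condEntropy q := by
  simp only [condEntropy]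
  exact congrArg _ (sum_congr rfl fun a _ =>
    e.sum_comp fun b => q a b * log (q a b / ∑ a', q a' b))

lemma condEntropy_nonneg {q : α → β → ℝ} (hq : ∀ a b, 0 ≤ q a b) : 0 ≤ condEntropy q := by
  refine neg_nonneg.2 (sum_nonpos fun a _ => sum_nonpos fun b _ => ?_)
  refine mul_nonpos_of_nonneg_of_nonpos (hq a b) (log_nonpos (div_nonneg (hq a b) ?_) ?_)
  · exact sum_nonneg fun a' _ => hq a' b
  · exact div_le_one_of_le₀ (single_le_sum (fun a' _ => hq a' b) (mem_univ a))
      (sum_nonneg fun a' _ => hq a' b)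

lemma condEntropy_chain_rule {q : α → γ → β → ℝ} (hq : ∀ a c b, 0 ≤ q a c b) :
    condEntropy (fun (x : α × γ) b => q x.1 x.2 b) =
      condEntropy (fun a b => ∑ c, q a c b) + condEntropy (fun c (x : α × β) => q x.1 c x.2) := by
  have hsplit : ∀ a c b, q a c b * log (q a c b / ∑ a', ∑ c', q a' c' b) =
      q a c b * log ((∑ c', q a c' b) / ∑ a', ∑ c', q a' c' b) +
        q a c b * log (q a c b / ∑ c', q a c' b) := by
    intro a c b
    rcases (hq a c b).eq_or_lt with h | h
    · simp [← h]
    have hmarg : 0 < ∑ c', q a c' b :=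
      h.trans_le (single_le_sum (fun c' _ => hq a c' b) (mem_univ c))
    have htotal : 0 < ∑ a', ∑ c', q a' c' b := hmarg.trans_le
      (single_le_sum (f := fun a' => ∑ c', q a' c' b)
        (fun a' _ => sum_nonneg fun c' _ => hq a' c' b) (mem_univ a))
    rw [log_div h.ne' htotal.ne', log_div hmarg.ne' htotal.ne', log_div h.ne' hmarg.ne']
    ring
  simp only [condEntropy, Fintype.sum_prod_type, hsplit, sum_add_distrib, sum_mul]
  rw [neg_add]
  congr 2
  · exact sum_congr rfl fun a _ => sum_comm
  · exact sum_comm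

lemma condEntropy_marginal_le {q : α → γ → β → ℝ} (hq : ∀ a c b, 0 ≤ q a c b) :
    condEntropy (fun a b => ∑ c, q a c b) ≤ condEntropy (fun (x : α × γ) b => q x.1 x.2 b) := by
  rw [condEntropy_chain_rule hq]
  exact le_add_of_nonneg_right (condEntropy_nonneg fun _ _ => hq _ _ _)

lemma condEntropy_prod_condition_le {q : α → β → γ → ℝ} (hq : ∀ a b c, 0 ≤ q a b c) :
    condEntropy (fun a (x : β × γ) => q a x.1 x.2) ≤ condEntropy (fun a b => ∑ c, q a b c) := by
  simp only [condEntropy, Fintype.sum_prod_type]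
  refine neg_le_neg (sum_le_sum fun a _ => sum_le_sum fun b _ => ?_)
  have hdom : ∀ c ∈ (univ : Finset γ), ∑ a', q a' b c = 0 → q a b c = 0 := fun c _ h =>
    (sum_eq_zero_iff_of_nonneg fun a' _ => hq a' b c).1 h a (mem_univ a)
  rw [sum_comm (f := fun a' c => q a' b c)]
  exact mul_log_sum_div_sum_le univ (fun c _ => hq a b c)
    (fun c _ => sum_nonneg fun a' _ => hq a' b c) hdom

end CondEntropy

theorem cond_entropy_pilot_chain_general
    {H D Xd Yp Yd : Type*} [Fintype H] [Fintype D] [Fintype Xd] [Fintype Yp] [Fintype Yd]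
    (p : H → D → Xd → Yp → Yd → ℝ)
    (hp_nonneg : ∀ h d xd yp yd, 0 ≤ p h d xd yp yd) :
    -(∑ h, ∑ d, ∑ yp, ∑ yd, (∑ xd, p h d xd yp yd) *
        Real.log ((∑ xd, p h d xd yp yd) /
          (∑ h', ∑ d', ∑ xd', p h' d' xd' yp yd))) ≤
      -(∑ h, ∑ yp, (∑ d, ∑ xd, ∑ yd, p h d xd yp yd) *
          Real.log ((∑ d, ∑ xd, ∑ yd, p h d xd yp yd) /
            (∑ h', ∑ d', ∑ xd', ∑ yd', p h' d' xd' yp yd'))) +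
      -(∑ d, ∑ xd, ∑ yd, ∑ h, (∑ yp, p h d xd yp yd) *
          Real.log ((∑ yp, p h d xd yp yd) /
            (∑ d', ∑ xd', ∑ yp', p h d' xd' yp' yd))) := by
  let e : (Yd × H) × Yp ≃ H × (Yp × Yd) :=
    ⟨fun w => (w.1.2, w.2, w.1.1), fun z => ((z.2.2, z.1), z.2.1), fun _ => rfl, fun _ => rfl⟩
  have key : condEntropy (fun (x : H × D) (y : Yp × Yd) => ∑ xd, p x.1 x.2 xd y.1 y.2) ≤
      condEntropy (fun h yp => ∑ d, ∑ xd, ∑ yd, p h d xd yp yd) +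
        condEntropy (fun (x : D × Xd) (w : Yd × H) => ∑ yp, p w.2 x.1 x.2 yp w.1) := calc
    _ ≤ condEntropy (fun (x : (H × D) × Xd) (y : Yp × Yd) => p x.1.1 x.1.2 x.2 y.1 y.2) :=
      condEntropy_marginal_le
        (q := fun (x : H × D) (xd : Xd) (y : Yp × Yd) => p x.1 x.2 xd y.1 y.2)
        fun _ _ _ => hp_nonneg _ _ _ _ _
    _ = condEntropy (fun (x : H × (D × Xd)) (y : Yp × Yd) => p x.1 x.2.1 x.2.2 y.1 y.2) :=
      (condEntropy_comp_equiv_left (Equiv.prodAssoc H D Xd).symm _).symm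
    _ = condEntropy (fun h (y : Yp × Yd) => ∑ x : D × Xd, p h x.1 x.2 y.1 y.2) +
          condEntropy (fun (x : D × Xd) (z : H × (Yp × Yd)) => p z.1 x.1 x.2 z.2.1 z.2.2) :=
      condEntropy_chain_rule (q := fun h (x : D × Xd) (y : Yp × Yd) => p h x.1 x.2 y.1 y.2)
        fun _ _ _ => hp_nonneg _ _ _ _ _
    _ ≤ condEntropy (fun h yp => ∑ yd, ∑ x : D × Xd, p h x.1 x.2 yp yd) +
          condEntropy (fun (x : D × Xd) (w : Yd × H) => ∑ yp, p w.2 x.1 x.2 yp w.1) :=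
      add_le_add
        (condEntropy_prod_condition_le
          (q := fun (h : H) (yp : Yp) (yd : Yd) => ∑ x : D × Xd, p h x.1 x.2 yp yd)
          fun _ _ _ => sum_nonneg fun _ _ => hp_nonneg _ _ _ _ _)
        ((condEntropy_comp_equiv_right e _).symm.trans_le <| condEntropy_prod_condition_le
          (q := fun (x : D × Xd) (w : Yd × H) (yp : Yp) => p w.2 x.1 x.2 yp w.1)
          fun _ _ _ => hp_nonneg _ _ _ _ _)
    _ = _ := by
      congr 2 with h yp
      rw [sum_comm, Fintype.sum_prod_type]
  simpa only [condEntropy, Fintype.sum_prod_type] using key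

/-- For a pmf `p` on `H × D × X_d × Y_p × Y_d`, the conditional entropies
computed from `p` satisfy `H(H, D | (Y_p, Y_d)) ≤ H(H | Y_p) + H((D, X_d) | (Y_d, H))`.
(Entropy chain (42a)–(42d) of the paper's Appendix A.) -/
theorem cond_entropy_pilot_chain
    {H D Xd Yp Yd : Type*} [Fintype H] [Fintype D] [Fintype Xd] [Fintype Yp] [Fintype Yd]
    (p : H → D → Xd → Yp → Yd → ℝ)
    (hp_nonneg : ∀ h d xd yp yd, 0 ≤ p h d xd yp yd)
    (hp_sum : ∑ h, ∑ d, ∑ xd, ∑ yp, ∑ yd, p h d xd yp yd = 1) :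
    -(∑ h, ∑ d, ∑ yp, ∑ yd, (∑ xd, p h d xd yp yd) *
        Real.log ((∑ xd, p h d xd yp yd) /
          (∑ h', ∑ d', ∑ xd', p h' d' xd' yp yd))) ≤
      -(∑ h, ∑ yp, (∑ d, ∑ xd, ∑ yd, p h d xd yp yd) *
          Real.log ((∑ d, ∑ xd, ∑ yd, p h d xd yp yd) /
            (∑ h', ∑ d', ∑ xd', ∑ yd', p h' d' xd' yp yd'))) +
      -(∑ d, ∑ xd, ∑ yd, ∑ h, (∑ yp, p h d xd yp yd) *
          Real.log ((∑ yp, p h d xd yp yd) /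
            (∑ d', ∑ xd', ∑ yp', p h d' xd' yp' yd))) :=
  cond_entropy_pilot_chain_general p hp_nonneg
end

section
/- Let H, D, X_d, Y_p, Y_d be finite sets and let p be a probability mass function on H × D × X_d × Y_p × Y_d. For each y_p ∈ Y_p let q₁(·|y_p) be a probability mass function on H that is strictly positive at every h with p_{H,Y_p}(h, y_p) > 0, and for each (y_d, h) ∈ Y_d × H let q₂(·,·|y_d, h) be a probability mass function on D × X_d that is strictly positive at every (d, x_d) with p_{D,X_d,Y_d,H}(d, x_d, y_d, h) > 0. Then H(H, D | (Y_p, Y_d)) ≤ −Σ_{h, y_p} p_{H,Y_p}(h, y_p) ln q₁(h | y_p) − Σ_{d, x_d, y_d, h} p_{D,X_d,Y_d,H}(d, x_d, y_d, h) ln q₂(d, x_d | y_d, h); that is, the conditional entropy of the channel and source given the received signal is upper-bounded by the sum of the cross-entropy loss of a pilot-based channel estimator and the cross-entropy loss of a JSCC codec. -/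
open Finset Real

lemma perm4 {A B C D : Type*} [Fintype A] [Fintype B] [Fintype C] [Fintype D]
    (f : A → B → C → D → ℝ) :
    ∑ a, ∑ b, ∑ c, ∑ d, f a b c d = ∑ c, ∑ d, ∑ a, ∑ b, f a b c d := by
  calc ∑ a, ∑ b, ∑ c, ∑ d, f a b c d
      = ∑ a, ∑ c, ∑ b, ∑ d, f a b c d :=
        Finset.sum_congr rfl fun a _ => Finset.sum_comm
    _ = ∑ c, ∑ a, ∑ b, ∑ d, f a b c d := Finset.sum_comm
    _ = ∑ c, ∑ a, ∑ d, ∑ b, f a b c d :=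
        Finset.sum_congr rfl fun c _ => Finset.sum_congr rfl fun a _ => Finset.sum_comm
    _ = ∑ c, ∑ d, ∑ a, ∑ b, f a b c d :=
        Finset.sum_congr rfl fun c _ => Finset.sum_comm

lemma perm5a {A B C D E : Type*} [Fintype A] [Fintype B] [Fintype C] [Fintype D] [Fintype E]
    (f : A → B → C → D → E → ℝ) :
    ∑ a, ∑ b, ∑ c, ∑ d, ∑ e, f a b c d e = ∑ c, ∑ a, ∑ d, ∑ e, ∑ b, f a b c d e := by
  calc ∑ a, ∑ b, ∑ c, ∑ d, ∑ e, f a b c d e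
      = ∑ a, ∑ c, ∑ b, ∑ d, ∑ e, f a b c d e :=
        Finset.sum_congr rfl fun a _ => Finset.sum_comm
    _ = ∑ c, ∑ a, ∑ b, ∑ d, ∑ e, f a b c d e := Finset.sum_comm
    _ = ∑ c, ∑ a, ∑ d, ∑ b, ∑ e, f a b c d e :=
        Finset.sum_congr rfl fun c _ => Finset.sum_congr rfl fun a _ => Finset.sum_comm
    _ = ∑ c, ∑ a, ∑ d, ∑ e, ∑ b, f a b c d e :=
        Finset.sum_congr rfl fun c _ => Finset.sum_congr rfl fun a _ =>
          Finset.sum_congr rfl fun d _ => Finset.sum_comm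

lemma perm5b {A B C D E : Type*} [Fintype A] [Fintype B] [Fintype C] [Fintype D] [Fintype E]
    (f : A → B → C → D → E → ℝ) :
    ∑ a, ∑ b, ∑ c, ∑ d, ∑ e, f a b c d e = ∑ e, ∑ c, ∑ d, ∑ a, ∑ b, f a b c d e := by
  calc ∑ a, ∑ b, ∑ c, ∑ d, ∑ e, f a b c d e
      = ∑ a, ∑ b, ∑ c, ∑ e, ∑ d, f a b c d e :=
        Finset.sum_congr rfl fun a _ => Finset.sum_congr rfl fun b _ =>
          Finset.sum_congr rfl fun c _ => Finset.sum_comm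
    _ = ∑ a, ∑ b, ∑ e, ∑ c, ∑ d, f a b c d e :=
        Finset.sum_congr rfl fun a _ => Finset.sum_congr rfl fun b _ => Finset.sum_comm
    _ = ∑ a, ∑ e, ∑ b, ∑ c, ∑ d, f a b c d e :=
        Finset.sum_congr rfl fun a _ => Finset.sum_comm
    _ = ∑ e, ∑ a, ∑ b, ∑ c, ∑ d, f a b c d e := Finset.sum_comm
    _ = ∑ e, ∑ c, ∑ d, ∑ a, ∑ b, f a b c d e :=
        Finset.sum_congr rfl fun e _ => perm4 (fun a b c d => f a b c d e)

lemma gibbs_aux {α β : Type*} [Fintype α] [Fintype β]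
    (w r : α → β → ℝ)
    (hw : ∀ a b, 0 ≤ w a b)
    (hr : ∀ a b, 0 ≤ r a b)
    (hr1 : ∀ b, ∑ a, r a b = 1)
    (hpos : ∀ a b, 0 < w a b → 0 < r a b) :
    ∑ b, ∑ a, w a b * Real.log (r a b) ≤
    ∑ b, ∑ a, w a b * Real.log (w a b / ∑ a', w a' b) := by
  apply Finset.sum_le_sum
  intro b _
  set P := ∑ a', w a' b with hP
  have hPnn : 0 ≤ P := Finset.sum_nonneg fun a _ => hw a b
  have key : ∀ a ∈ (univ : Finset α),
      w a b * Real.log (r a b) - w a b * Real.log (w a b / P) ≤ r a b * P - w a b := by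
    intro a _
    rcases eq_or_lt_of_le (hw a b) with h0 | hwpos
    · rw [← h0]; simp
      exact mul_nonneg (hr a b) hPnn
    · have hPpos : 0 < P := lt_of_lt_of_le hwpos (Finset.single_le_sum (fun a _ => hw a b) (mem_univ a))
      have hrpos := hpos a b hwpos
      have hx : 0 < r a b * P / w a b := div_pos (mul_pos hrpos hPpos) hwpos
      have hlog := Real.log_le_sub_one_of_pos hx
      have hrw : Real.log (r a b) - Real.log (w a b / P) = Real.log (r a b * P / w a b) := by
        rw [Real.log_div (ne_of_gt (mul_pos hrpos hPpos)) (ne_of_gt hwpos),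
            Real.log_mul (ne_of_gt hrpos) (ne_of_gt hPpos),
            Real.log_div (ne_of_gt hwpos) (ne_of_gt hPpos)]
        ring
      calc w a b * Real.log (r a b) - w a b * Real.log (w a b / P)
          = w a b * Real.log (r a b * P / w a b) := by rw [← hrw]; ring
        _ ≤ w a b * (r a b * P / w a b - 1) :=
            mul_le_mul_of_nonneg_left hlog (le_of_lt hwpos)
        _ = r a b * P - w a b := by field_simp
  have hle := Finset.sum_le_sum key
  have hsum : ∑ a, (r a b * P - w a b) = 0 := by
    rw [Finset.sum_sub_distrib, ← Finset.sum_mul, hr1]; simp [hP]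
  rw [Finset.sum_sub_distrib] at hle
  linarith

/-- For a pmf `p` on `H × D × X_d × Y_p × Y_d`, a family of pmfs
`q₁(·|y_p)` on `H` strictly positive wherever the marginal `p_{H,Y_p}` is, and a
family of pmfs `q₂(·,·|y_d,h)` on `D × X_d` strictly positive wherever the marginal
`p_{D,X_d,Y_d,H}` is, the conditional entropy of the channel and source given the
received signal is upper-bounded by the sum of the cross-entropy loss of a
pilot-based channel estimator and that of a JSCC codec:
`H(H, D | (Y_p, Y_d)) ≤ −Σ p_{H,Y_p} ln q₁(h|y_p) − Σ p_{D,X_d,Y_d,H} ln q₂(d,x_d|y_d,h)`.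
(Relaxation (42) of the paper's Appendix A.) -/
theorem cond_entropy_le_pilot_estimator_loss_add_jscc_loss
    {H D Xd Yp Yd : Type*} [Fintype H] [Fintype D] [Fintype Xd] [Fintype Yp] [Fintype Yd]
    (p : H → D → Xd → Yp → Yd → ℝ)
    (hp_nonneg : ∀ h d xd yp yd, 0 ≤ p h d xd yp yd)
    (hp_sum : ∑ h, ∑ d, ∑ xd, ∑ yp, ∑ yd, p h d xd yp yd = 1)
    (q₁ : Yp → H → ℝ)
    (hq₁_nonneg : ∀ yp h, 0 ≤ q₁ yp h)
    (hq₁_sum : ∀ yp, ∑ h, q₁ yp h = 1)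
    (hq₁_pos : ∀ yp h, 0 < (∑ d, ∑ xd, ∑ yd, p h d xd yp yd) → 0 < q₁ yp h)
    (q₂ : Yd → H → D → Xd → ℝ)
    (hq₂_nonneg : ∀ yd h d xd, 0 ≤ q₂ yd h d xd)
    (hq₂_sum : ∀ yd h, ∑ d, ∑ xd, q₂ yd h d xd = 1)
    (hq₂_pos : ∀ yd h d xd, 0 < (∑ yp, p h d xd yp yd) → 0 < q₂ yd h d xd) :
    -(∑ h, ∑ d, ∑ yp, ∑ yd, (∑ xd, p h d xd yp yd) *
        Real.log ((∑ xd, p h d xd yp yd) /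
          (∑ h', ∑ d', ∑ xd', p h' d' xd' yp yd))) ≤
      -(∑ h, ∑ yp, (∑ d, ∑ xd, ∑ yd, p h d xd yp yd) * Real.log (q₁ yp h)) +
      -(∑ d, ∑ xd, ∑ yd, ∑ h, (∑ yp, p h d xd yp yd) * Real.log (q₂ yd h d xd)) := by
  classical
  set W : H × D → Yp × Yd → ℝ := fun a b => ∑ xd, p a.1 a.2 xd b.1 b.2 with hWdef
  set R : H × D → Yp × Yd → ℝ :=
    fun a b => q₁ b.1 a.1 * ∑ xd, q₂ b.2 a.1 a.2 xd with hRdef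
  have hWnn : ∀ a b, 0 ≤ W a b := fun a b => Finset.sum_nonneg fun xd _ => hp_nonneg _ _ _ _ _
  have hRnn : ∀ a b, 0 ≤ R a b := fun a b =>
    mul_nonneg (hq₁_nonneg _ _) (Finset.sum_nonneg fun _ _ => hq₂_nonneg _ _ _ _)
  have hR1 : ∀ b, ∑ a, R a b = 1 := by
    intro b
    rw [Fintype.sum_prod_type]
    calc ∑ h, ∑ d, R (h, d) b
        = ∑ h, q₁ b.1 h * ∑ d, ∑ xd, q₂ b.2 h d xd := by
          refine Finset.sum_congr rfl fun h _ => ?_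
          simp only [hRdef, Finset.mul_sum]
      _ = 1 := by simp [hq₂_sum, hq₁_sum]
  have hq1pos' : ∀ a b, 0 < W a b → 0 < q₁ b.1 a.1 := by
    intro a b hw
    apply hq₁_pos b.1 a.1
    have h1 : (∑ xd, p a.1 a.2 xd b.1 b.2) ≤ ∑ xd, ∑ yd, p a.1 a.2 xd b.1 yd :=
      Finset.sum_le_sum fun xd _ =>
        Finset.single_le_sum (f := fun yd => p a.1 a.2 xd b.1 yd) (fun yd _ => hp_nonneg _ _ _ _ _) (mem_univ b.2)
    have h2 : (∑ xd, ∑ yd, p a.1 a.2 xd b.1 yd) ≤ ∑ d, ∑ xd, ∑ yd, p a.1 d xd b.1 yd :=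
      Finset.single_le_sum
        (f := fun d => ∑ xd, ∑ yd, p a.1 d xd b.1 yd)
        (fun d _ => Finset.sum_nonneg fun _ _ => Finset.sum_nonneg fun _ _ => hp_nonneg _ _ _ _ _)
        (mem_univ a.2)
    exact lt_of_lt_of_le hw (le_trans h1 h2)
  have hQpos : ∀ a b, 0 < W a b → 0 < ∑ xd, q₂ b.2 a.1 a.2 xd := by
    intro a b hw
    have h0 : ∑ _xd : Xd, (0 : ℝ) < ∑ xd, p a.1 a.2 xd b.1 b.2 := by simpa using hw
    obtain ⟨xd0, -, hx⟩ := Finset.exists_lt_of_sum_lt h0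
    have hm : 0 < ∑ yp, p a.1 a.2 xd0 yp b.2 :=
      lt_of_lt_of_le hx (Finset.single_le_sum (f := fun yp => p a.1 a.2 xd0 yp b.2) (fun yp _ => hp_nonneg _ _ _ _ _) (mem_univ b.1))
    exact Finset.sum_pos' (fun xd _ => hq₂_nonneg _ _ _ _)
      ⟨xd0, mem_univ _, hq₂_pos b.2 a.1 a.2 xd0 hm⟩
  have hpos : ∀ a b, 0 < W a b → 0 < R a b := fun a b h =>
    mul_pos (hq1pos' a b h) (hQpos a b h)
  have G := gibbs_aux W R hWnn hRnn hR1 hpos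
  -- identify entropy term
  have EL : (∑ b : Yp × Yd, ∑ a : H × D, W a b * Real.log (W a b / ∑ a', W a' b)) =
      ∑ h, ∑ d, ∑ yp, ∑ yd, (∑ xd, p h d xd yp yd) *
        Real.log ((∑ xd, p h d xd yp yd) / (∑ h', ∑ d', ∑ xd', p h' d' xd' yp yd)) := by
    simp only [hWdef, Fintype.sum_prod_type]
    exact (perm4 (fun h d yp yd => (∑ xd, p h d xd yp yd) *
      Real.log ((∑ xd, p h d xd yp yd) / (∑ h', ∑ d', ∑ xd', p h' d' xd' yp yd)))).symm
  -- split log of product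
  have split : (∑ b : Yp × Yd, ∑ a : H × D, W a b * Real.log (R a b)) =
      (∑ b : Yp × Yd, ∑ a : H × D, W a b * Real.log (q₁ b.1 a.1)) +
      (∑ b : Yp × Yd, ∑ a : H × D, W a b * Real.log (∑ xd, q₂ b.2 a.1 a.2 xd)) := by
    rw [← Finset.sum_add_distrib]
    refine Finset.sum_congr rfl fun b _ => ?_
    rw [← Finset.sum_add_distrib]
    refine Finset.sum_congr rfl fun a _ => ?_
    rcases eq_or_lt_of_le (hWnn a b) with h0 | hwpos
    · rw [← h0]; ring
    · rw [hRdef]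
      simp only
      rw [Real.log_mul (ne_of_gt (hq1pos' a b hwpos)) (ne_of_gt (hQpos a b hwpos))]
      ring
  -- first cross-entropy term
  have ET1 : (∑ b : Yp × Yd, ∑ a : H × D, W a b * Real.log (q₁ b.1 a.1)) =
      ∑ h, ∑ yp, (∑ d, ∑ xd, ∑ yd, p h d xd yp yd) * Real.log (q₁ yp h) := by
    simp only [hWdef, Fintype.sum_prod_type]
    simp only [Finset.sum_mul]
    exact perm5a (fun yp yd h d xd => p h d xd yp yd * Real.log (q₁ yp h))
  -- second cross-entropy term
  have T2le : (∑ d, ∑ xd, ∑ yd, ∑ h, (∑ yp, p h d xd yp yd) * Real.log (q₂ yd h d xd)) ≤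
      ∑ b : Yp × Yd, ∑ a : H × D, W a b * Real.log (∑ xd, q₂ b.2 a.1 a.2 xd) := by
    simp only [hWdef, Fintype.sum_prod_type]
    simp only [Finset.sum_mul]
    rw [perm5b (fun d xd yd h yp => p h d xd yp yd * Real.log (q₂ yd h d xd))]
    refine Finset.sum_le_sum fun yp _ => Finset.sum_le_sum fun yd _ =>
      Finset.sum_le_sum fun h _ => Finset.sum_le_sum fun d _ =>
      Finset.sum_le_sum fun xd _ => ?_
    rcases eq_or_lt_of_le (hp_nonneg h d xd yp yd) with h0 | hppos
    · rw [← h0]; simp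
    · have hm : 0 < ∑ yp', p h d xd yp' yd :=
        lt_of_lt_of_le hppos (Finset.single_le_sum (f := fun yp' => p h d xd yp' yd) (fun yp' _ => hp_nonneg _ _ _ _ _) (mem_univ yp))
      have hq2 := hq₂_pos yd h d xd hm
      have hle : q₂ yd h d xd ≤ ∑ xd', q₂ yd h d xd' :=
        Finset.single_le_sum (f := fun xd' => q₂ yd h d xd') (fun xd' _ => hq₂_nonneg _ _ _ _) (mem_univ xd)
      exact mul_le_mul_of_nonneg_left (Real.log_le_log hq2 hle) (le_of_lt hppos)
  rw [split, ET1] at G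
  rw [EL] at G
  linarith
end

section
/- Let p₀ : ℝ → ℝ be a probability density (measurable, nonnegative, integrable, with ∫_ℝ p₀(x) dx = 1) satisfying ∫_ℝ x² p₀(x) dx < ∞, and let σ > 0. Define p_Y(y) = ∫_ℝ p₀(x) φ_σ(y − x) dx and ℓ(y) = ln p_Y(y). Then p_Y is everywhere positive and twice differentiable, and for every y ∈ ℝ, with posterior mean m(y) = y + σ² ℓ′(y), the second-order Tweedie identity holds: ∫_ℝ (x − m(y))² p₀(x) φ_σ(y − x) dx = p_Y(y) · (σ² + σ⁴ ℓ″(y)). Equivalently, the posterior variance of X given Y = y in the model Y = X + σN (N standard Gaussian independent of X ∼ p₀) equals σ² + σ⁴ (d²/dy²) ln p_Y(y). -/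
/-!
Differentiation under the integral sign is legitimate because the Gaussian kernel and its first
two derivatives are bounded while `p₀` is integrable; it gives `p_Y' = ∫ p₀(x) φ'(y - x) dx` and
`p_Y'' = ∫ p₀(x) φ''(y - x) dx`. Since `φ'(t) = -(t/σ²) φ(t)` and `φ''(t) = (t²/σ⁴ - 1/σ²) φ(t)`,
the first two moments of `x - y` against `p₀(x) φ(y - x)` are `σ² p_Y'` and `σ⁴ p_Y'' + σ² p_Y`.
Expanding the square around `m(y)` and substituting `ℓ' = p_Y'/p_Y` and
`ℓ'' = (p_Y'' p_Y - p_Y'²)/p_Y²` gives the identity.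
-/

open MeasureTheory Real

section KernelIntegral

variable {p k : ℝ → ℝ}

theorem integrable_mul_comp_sub (hp : Integrable p) (hk : Continuous k)
    (hk_bdd : ∃ C, ∀ t, |k t| ≤ C) (y : ℝ) : Integrable fun x => p x * k (y - x) := by
  obtain ⟨C, hC⟩ := hk_bdd
  exact hp.mul_bdd (hk.comp (continuous_sub_left y)).aestronglyMeasurable
    (c := C) (.of_forall fun x => hC (y - x))

theorem hasDerivAt_integral_mul_comp_sub (hp : Integrable p) (hk : Differentiable ℝ k)
    (hk_bdd : ∃ C, ∀ t, |k t| ≤ C) (hk' : Continuous (deriv k))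
    (hk'_bdd : ∃ C, ∀ t, |deriv k t| ≤ C) (y : ℝ) :
    HasDerivAt (fun y => ∫ x, p x * k (y - x)) (∫ x, p x * deriv k (y - x)) y := by
  obtain ⟨C, hC⟩ := hk'_bdd
  have hint := integrable_mul_comp_sub hp hk.continuous hk_bdd
  refine (hasDerivAt_integral_of_dominated_loc_of_deriv_le (bound := fun x => C * |p x|)
    (F := fun y x => p x * k (y - x)) (F' := fun y x => p x * deriv k (y - x))
    (Metric.ball_mem_nhds y one_pos) (.of_forall fun y => (hint y).aestronglyMeasurable)
    (hint y) (integrable_mul_comp_sub hp hk' ⟨C, hC⟩ y).aestronglyMeasurable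
    (.of_forall fun x y _ => ?_) (hp.abs.const_mul C)
    (.of_forall fun x y _ => ?_)).2
  · rw [norm_mul, Real.norm_eq_abs, Real.norm_eq_abs, mul_comm]
    exact mul_le_mul_of_nonneg_right (hC _) (abs_nonneg _)
  · simpa using ((hk (y - x)).hasDerivAt.comp y ((hasDerivAt_id y).sub_const x)).const_mul (p x)

theorem integral_mul_comp_sub_pos (hp_nonneg : 0 ≤ p) (hp : Integrable p)
    (hp_pos : 0 < ∫ x, p x) (hk_pos : ∀ t, 0 < k t) {y : ℝ}
    (hint : Integrable fun x => p x * k (y - x)) : 0 < ∫ x, p x * k (y - x) := by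
  refine (integral_pos_iff_support_of_nonneg (fun x => mul_nonneg (hp_nonneg x)
    (hk_pos _).le) hint).2 ?_
  have hsupp : Function.support (fun x => p x * k (y - x)) = Function.support p :=
    Function.support_mul_of_ne_zero_right _ fun x => (hk_pos (y - x)).ne'
  rwa [hsupp, ← integral_pos_iff_support_of_nonneg hp_nonneg hp]

end KernelIntegral

theorem deriv_log_comp {f f' : ℝ → ℝ} (hf : ∀ y, HasDerivAt f (f' y) y) (hf0 : ∀ y, f y ≠ 0) :
    deriv (fun y => log (f y)) = fun y => f' y / f y :=
  funext fun y => ((hf y).log (hf0 y)).deriv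

theorem deriv_deriv_log_comp {f f' f'' : ℝ → ℝ} (hf : ∀ y, HasDerivAt f (f' y) y)
    (hf' : ∀ y, HasDerivAt f' (f'' y) y) (hf0 : ∀ y, f y ≠ 0) (y : ℝ) :
    deriv (deriv fun y => log (f y)) y = (f'' y * f y - f' y ^ 2) / f y ^ 2 := by
  rw [deriv_log_comp hf hf0, ((hf' y).fun_div (hf y) (hf0 y)).deriv, sq]
  ring

noncomputable def gaussianKernel (σ t : ℝ) : ℝ :=
  (√(2 * π * σ ^ 2))⁻¹ * exp (-t ^ 2 / (2 * σ ^ 2))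

section Gaussian

variable {σ : ℝ}

theorem gaussianKernel_pos (hσ : σ ≠ 0) (t : ℝ) : 0 < gaussianKernel σ t := by
  unfold gaussianKernel
  positivity

theorem gaussianKernel_zero (σ : ℝ) : gaussianKernel σ 0 = (√(2 * π * σ ^ 2))⁻¹ := by
  simp [gaussianKernel]

theorem abs_gaussianKernel_le (σ t : ℝ) : |gaussianKernel σ t| ≤ gaussianKernel σ 0 := by
  rw [gaussianKernel_zero, gaussianKernel, abs_of_nonneg (by positivity)]
  refine mul_le_of_le_one_right (by positivity) (exp_le_one_iff.2 ?_)
  exact div_nonpos_of_nonpos_of_nonneg (by simpa using sq_nonneg t) (by positivity)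

theorem one_add_sq_mul_gaussianKernel_le (hσ : σ ≠ 0) (t : ℝ) :
    (1 + t ^ 2) * gaussianKernel σ t ≤ (1 + 2 * σ ^ 2) * gaussianKernel σ 0 := by
  have h2σ : 0 < 2 * σ ^ 2 := by positivity
  have hsq : t ^ 2 * exp (-t ^ 2 / (2 * σ ^ 2)) ≤ 2 * σ ^ 2 := by
    have hexp : t ^ 2 ≤ 2 * σ ^ 2 * exp (t ^ 2 / (2 * σ ^ 2)) := by
      have := add_one_le_exp (t ^ 2 / (2 * σ ^ 2))
      rw [div_add_one h2σ.ne', div_le_iff₀ h2σ] at this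
      nlinarith
    rw [neg_div, exp_neg, ← div_eq_mul_inv, div_le_iff₀ (exp_pos _)]
    exact hexp
  have hle := abs_gaussianKernel_le σ t
  rw [abs_of_pos (gaussianKernel_pos hσ t)] at hle
  have hc : 0 ≤ gaussianKernel σ 0 := (gaussianKernel_pos hσ 0).le
  calc (1 + t ^ 2) * gaussianKernel σ t
      = gaussianKernel σ t + gaussianKernel σ 0 * (t ^ 2 * exp (-t ^ 2 / (2 * σ ^ 2))) := by
        rw [gaussianKernel_zero, gaussianKernel]; ring
    _ ≤ gaussianKernel σ 0 + gaussianKernel σ 0 * (2 * σ ^ 2) := by gcongr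
    _ = (1 + 2 * σ ^ 2) * gaussianKernel σ 0 := by ring

theorem exists_abs_mul_gaussianKernel_le (hσ : σ ≠ 0) {q : ℝ → ℝ} {K : ℝ}
    (hq : ∀ t, |q t| ≤ K * (1 + t ^ 2)) : ∃ C, ∀ t, |q t * gaussianKernel σ t| ≤ C := by
  have hK : 0 ≤ K := by simpa using (abs_nonneg _).trans (hq 0)
  refine ⟨K * ((1 + 2 * σ ^ 2) * gaussianKernel σ 0), fun t => ?_⟩
  rw [abs_mul, abs_of_pos (gaussianKernel_pos hσ t)]
  calc |q t| * gaussianKernel σ t ≤ K * (1 + t ^ 2) * gaussianKernel σ t :=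
        mul_le_mul_of_nonneg_right (hq t) (gaussianKernel_pos hσ t).le
    _ = K * ((1 + t ^ 2) * gaussianKernel σ t) := mul_assoc _ _ _
    _ ≤ K * ((1 + 2 * σ ^ 2) * gaussianKernel σ 0) :=
        mul_le_mul_of_nonneg_left (one_add_sq_mul_gaussianKernel_le hσ t) hK

theorem hasDerivAt_gaussianKernel (σ t : ℝ) :
    HasDerivAt (gaussianKernel σ) (-(t / σ ^ 2) * gaussianKernel σ t) t := by
  have hexp : HasDerivAt (fun t => -t ^ 2 / (2 * σ ^ 2)) (-(t / σ ^ 2)) t :=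
    ((hasDerivAt_pow 2 t).fun_neg.div_const (2 * σ ^ 2)).congr_deriv (by field_simp; norm_num)
  exact (hexp.exp.const_mul (√(2 * π * σ ^ 2))⁻¹).congr_deriv (by rw [gaussianKernel]; ring)

theorem deriv_gaussianKernel (σ : ℝ) :
    deriv (gaussianKernel σ) = fun t => -(t / σ ^ 2) * gaussianKernel σ t :=
  funext fun t => (hasDerivAt_gaussianKernel σ t).deriv

theorem differentiable_gaussianKernel (σ : ℝ) : Differentiable ℝ (gaussianKernel σ) :=
  fun t => (hasDerivAt_gaussianKernel σ t).differentiableAt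

theorem hasDerivAt_deriv_gaussianKernel (σ t : ℝ) :
    HasDerivAt (deriv (gaussianKernel σ))
      ((t ^ 2 / σ ^ 4 - 1 / σ ^ 2) * gaussianKernel σ t) t := by
  rw [deriv_gaussianKernel]
  exact (((hasDerivAt_id t).div_const (σ ^ 2)).fun_neg.fun_mul
    (hasDerivAt_gaussianKernel σ t)).congr_deriv (by simp only [id]; ring)

theorem deriv_deriv_gaussianKernel (σ : ℝ) :
    deriv (deriv (gaussianKernel σ)) = fun t => (t ^ 2 / σ ^ 4 - 1 / σ ^ 2) * gaussianKernel σ t :=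
  funext fun t => (hasDerivAt_deriv_gaussianKernel σ t).deriv

theorem differentiable_deriv_gaussianKernel (σ : ℝ) :
    Differentiable ℝ (deriv (gaussianKernel σ)) :=
  fun t => (hasDerivAt_deriv_gaussianKernel σ t).differentiableAt

theorem continuous_deriv_deriv_gaussianKernel (σ : ℝ) :
    Continuous (deriv (deriv (gaussianKernel σ))) := by
  rw [deriv_deriv_gaussianKernel]
  have := (differentiable_gaussianKernel σ).continuous
  fun_prop

theorem exists_abs_deriv_gaussianKernel_le (hσ : σ ≠ 0) :
    ∃ C, ∀ t, |deriv (gaussianKernel σ) t| ≤ C := by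
  rw [deriv_gaussianKernel]
  refine exists_abs_mul_gaussianKernel_le hσ (K := (σ ^ 2)⁻¹) fun t => ?_
  rw [abs_neg, abs_div, abs_of_pos (by positivity : 0 < σ ^ 2), div_eq_inv_mul]
  gcongr
  nlinarith [sq_abs t, sq_nonneg (|t| - 1)]

theorem exists_abs_deriv_deriv_gaussianKernel_le (hσ : σ ≠ 0) :
    ∃ C, ∀ t, |deriv (deriv (gaussianKernel σ)) t| ≤ C := by
  rw [deriv_deriv_gaussianKernel]
  refine exists_abs_mul_gaussianKernel_le hσ (K := (σ ^ 4)⁻¹ + (σ ^ 2)⁻¹) fun t => ?_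
  calc |t ^ 2 / σ ^ 4 - 1 / σ ^ 2| ≤ |t ^ 2 / σ ^ 4| + |1 / σ ^ 2| := abs_sub _ _
    _ = (σ ^ 4)⁻¹ * t ^ 2 + (σ ^ 2)⁻¹ := by
        rw [abs_of_nonneg (by positivity), abs_of_nonneg (by positivity)]; ring
    _ ≤ ((σ ^ 4)⁻¹ + (σ ^ 2)⁻¹) * (1 + t ^ 2) := by
        nlinarith [show 0 ≤ (σ ^ 4)⁻¹ by positivity, show 0 ≤ (σ ^ 2)⁻¹ * t ^ 2 by positivity]

theorem integral_sq_sub_mul_gaussianKernel (hσ : σ ≠ 0) {p : ℝ → ℝ} (hp : Integrable p)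
    (y m : ℝ) :
    ∫ x, (x - (y + m)) ^ 2 * p x * gaussianKernel σ (y - x) =
      σ ^ 4 * (∫ x, p x * deriv (deriv (gaussianKernel σ)) (y - x))
        - 2 * σ ^ 2 * m * (∫ x, p x * deriv (gaussianKernel σ) (y - x))
        + (σ ^ 2 + m ^ 2) * ∫ x, p x * gaussianKernel σ (y - x) := by
  have h0 := integrable_mul_comp_sub hp (differentiable_gaussianKernel σ).continuous
    ⟨_, abs_gaussianKernel_le σ⟩ y
  have h1 := integrable_mul_comp_sub hp (differentiable_deriv_gaussianKernel σ).continuous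
    (exists_abs_deriv_gaussianKernel_le hσ) y
  have h2 := integrable_mul_comp_sub hp (continuous_deriv_deriv_gaussianKernel σ)
    (exists_abs_deriv_deriv_gaussianKernel_le hσ) y
  have hpt : (fun x => (x - (y + m)) ^ 2 * p x * gaussianKernel σ (y - x)) = fun x =>
      σ ^ 4 * (p x * deriv (deriv (gaussianKernel σ)) (y - x))
        - 2 * σ ^ 2 * m * (p x * deriv (gaussianKernel σ) (y - x))
        + (σ ^ 2 + m ^ 2) * (p x * gaussianKernel σ (y - x)) := by
    ext x
    rw [deriv_deriv_gaussianKernel, deriv_gaussianKernel]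
    field_simp
    ring
  rw [hpt, integral_add ((h2.const_mul _).sub' (h1.const_mul _)) (h0.const_mul _),
    integral_sub (h2.const_mul _) (h1.const_mul _), integral_const_mul, integral_const_mul,
    integral_const_mul]

end Gaussian

theorem tweedie_second_order_general
    (p₀ : ℝ → ℝ) (hnonneg : ∀ x, 0 ≤ p₀ x)
    (hint : MeasureTheory.Integrable p₀)
    (hsum : ∫ x, p₀ x = 1)
    (σ : ℝ) (hσ : 0 < σ) :
    let φ : ℝ → ℝ := fun t => (Real.sqrt (2 * Real.pi * σ ^ 2))⁻¹ *
      Real.exp (-t ^ 2 / (2 * σ ^ 2))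
    let pY : ℝ → ℝ := fun y => ∫ x, p₀ x * φ (y - x)
    let ℓ : ℝ → ℝ := fun y => Real.log (pY y)
    (∀ y, 0 < pY y) ∧ Differentiable ℝ pY ∧ Differentiable ℝ (deriv pY) ∧
      ∀ y, ∫ x, (x - (y + σ ^ 2 * deriv ℓ y)) ^ 2 * p₀ x * φ (y - x) =
        pY y * (σ ^ 2 + σ ^ 4 * deriv (deriv ℓ) y) := by
  intro φ pY ℓ
  have hφ : φ = gaussianKernel σ := rfl
  have hσ0 : σ ≠ 0 := hσ.ne'
  have hpY : ∀ y, HasDerivAt pY (∫ x, p₀ x * deriv (gaussianKernel σ) (y - x)) y :=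
    hasDerivAt_integral_mul_comp_sub hint (differentiable_gaussianKernel σ)
      ⟨_, abs_gaussianKernel_le σ⟩ (differentiable_deriv_gaussianKernel σ).continuous
      (exists_abs_deriv_gaussianKernel_le hσ0)
  have hpY' : ∀ y, HasDerivAt (fun y => ∫ x, p₀ x * deriv (gaussianKernel σ) (y - x))
      (∫ x, p₀ x * deriv (deriv (gaussianKernel σ)) (y - x)) y :=
    hasDerivAt_integral_mul_comp_sub hint (differentiable_deriv_gaussianKernel σ)
      (exists_abs_deriv_gaussianKernel_le hσ0) (continuous_deriv_deriv_gaussianKernel σ)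
      (exists_abs_deriv_deriv_gaussianKernel_le hσ0)
  have hpos : ∀ y, 0 < pY y := fun y =>
    integral_mul_comp_sub_pos hnonneg hint (hsum ▸ one_pos) (gaussianKernel_pos hσ0)
      (integrable_mul_comp_sub hint (differentiable_gaussianKernel σ).continuous
        ⟨_, abs_gaussianKernel_le σ⟩ y)
  have hpY0 : ∀ y, pY y ≠ 0 := fun y => (hpos y).ne'
  refine ⟨hpos, fun y => (hpY y).differentiableAt, ?_, fun y => ?_⟩
  · rw [funext fun y => (hpY y).deriv]
    exact fun y => (hpY' y).differentiableAt
  · rw [deriv_deriv_log_comp hpY hpY' hpY0, deriv_log_comp hpY hpY0, hφ]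
    beta_reduce
    rw [integral_sq_sub_mul_gaussianKernel hσ0 hint,
      show ∫ x, p₀ x * gaussianKernel σ (y - x) = pY y from rfl]
    field_simp [hpY0 y]
    ring

/-- (Second-order Tweedie identity.)  Let `p₀` be a probability density on
`ℝ` with finite second moment, `σ > 0`, `φ_σ` the centered Gaussian density with
standard deviation `σ`, `p_Y(y) = ∫ p₀(x) φ_σ(y − x) dx` and `ℓ = ln p_Y`.  Then `p_Y`
is everywhere positive and twice differentiable, and with posterior mean
`m(y) = y + σ² ℓ′(y)`, the posterior variance of `X` given `Y = y` satisfies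
`∫ (x − m(y))² p₀(x) φ_σ(y−x) dx = p_Y(y)·(σ² + σ⁴ ℓ″(y))` for every `y`. -/
theorem tweedie_second_order
    (p₀ : ℝ → ℝ) (hmeas : Measurable p₀) (hnonneg : ∀ x, 0 ≤ p₀ x)
    (hint : MeasureTheory.Integrable p₀)
    (hsum : ∫ x, p₀ x = 1)
    (hmom2 : MeasureTheory.Integrable (fun x => x ^ 2 * p₀ x))
    (σ : ℝ) (hσ : 0 < σ) :
    let φ : ℝ → ℝ := fun t => (Real.sqrt (2 * Real.pi * σ ^ 2))⁻¹ *
      Real.exp (-t ^ 2 / (2 * σ ^ 2))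
    let pY : ℝ → ℝ := fun y => ∫ x, p₀ x * φ (y - x)
    let ℓ : ℝ → ℝ := fun y => Real.log (pY y)
    (∀ y, 0 < pY y) ∧ Differentiable ℝ pY ∧ Differentiable ℝ (deriv pY) ∧
      ∀ y, ∫ x, (x - (y + σ ^ 2 * deriv ℓ y)) ^ 2 * p₀ x * φ (y - x) =
        pY y * (σ ^ 2 + σ ^ 4 * deriv (deriv ℓ) y) :=
  tweedie_second_order_general p₀ hnonneg hint hsum σ hσ
end
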